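/- For k ∈ ℕ, let φ_k be the automorphism of F₄ = ⟨a,b,c,d⟩ given by a↦a, b↦ba, c↦ca^{k+1}, d↦dc. If φ_k^p is conjugate in Aut(F₄) to φ_{k'}^{p'} (for k, k', p, p' ∈ ℕ, p, p' ≥ 1), then k = k' and p = p'. -/

import Mathlib

/-!
Abelianizing `F₄` turns `φ_k` into the unipotent matrix `M = 1 + N` with `K = k + 1`, and
`M ^ n = 1 + n N + (n choose 2) N²` since `N³ = 0`. If `U M ^ n = M' ^ n' U` with `U ∈ GL(4, ℤ)`,
comparing entries forces the last row of `U` to be `(0, 0, 0, u)` with `u = ±1`, and then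
`n U₂₂ = n' u` and `n K U₀₀ = n' K' U₂₂`, so `n ∣ n'` and `n² K ∣ n'² K'`. Conjugacy is symmetric,
so both divisibilities go both ways.
-/

namespace Stmt10

abbrev F4 := FreeGroup (Fin 4)

def a : F4 := FreeGroup.of 0
def b : F4 := FreeGroup.of 1
def c : F4 := FreeGroup.of 2
def d : F4 := FreeGroup.of 3

open scoped Matrix

section Abelianization

variable {ι : Type*} [DecidableEq ι]

def exponentSum : FreeGroup ι →* Multiplicative (ι → ℤ) :=
  FreeGroup.lift fun i => .ofAdd (Pi.single i 1)

@[simp]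
lemma toAdd_exponentSum_of (i : ι) : (exponentSum (.of i)).toAdd = Pi.single i 1 := by
  simp [exponentSum]

variable [Fintype ι]

def exponentSumMatrix (α : MulAut (FreeGroup ι)) : Matrix ι ι ℤ :=
  .of fun i j => (exponentSum (α (.of j))).toAdd i

lemma toAdd_exponentSum_apply (α : MulAut (FreeGroup ι)) (x : FreeGroup ι) :
    (exponentSum (α x)).toAdd = exponentSumMatrix α *ᵥ (exponentSum x).toAdd := by
  have hcomp : exponentSum.comp α.toMonoidHom = (AddMonoidHom.toMultiplicative
      (exponentSumMatrix α).mulVecLin.toAddMonoidHom).comp exponentSum := by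
    refine FreeGroup.ext_hom _ _ fun j => ?_
    ext i
    simp [exponentSumMatrix, Matrix.mulVec_single]
  exact congrArg Multiplicative.toAdd (DFunLike.congr_fun hcomp x)

def abelianizationMatrix : MulAut (FreeGroup ι) →* Matrix ι ι ℤ where
  toFun := exponentSumMatrix
  map_one' := by
    ext i j
    simp [exponentSumMatrix, Pi.single_apply, Matrix.one_apply]
  map_mul' α β := by
    ext i j
    change (exponentSum (α (β (.of j)))).toAdd i = _
    rw [toAdd_exponentSum_apply]
    rfl

end Abelianization

/-- For `K = k + 1` this is the abelianization of `φ_k ^ n`. -/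
def phiMatrix (K n : ℕ) : Matrix (Fin 4) (Fin 4) ℤ :=
  !![1, (n : ℤ), n * K, n.choose 2 * K; 0, 1, 0, 0; 0, 0, 1, n; 0, 0, 0, 1]

lemma phiMatrix_pow (K n : ℕ) : phiMatrix K 1 ^ n = phiMatrix K n := by
  induction n with
  | zero => ext i j; fin_cases i <;> fin_cases j <;> simp [phiMatrix]
  | succ n ih =>
    rw [pow_succ, ih]
    ext i j
    fin_cases i <;> fin_cases j <;>
      simp [phiMatrix, Matrix.mul_apply, Fin.sum_univ_four, Nat.choose_succ_succ'] <;> ring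

lemma abelianizationMatrix_eq_phiMatrix {k : ℕ} {α : MulAut F4}
    (ha : α a = a) (hb : α b = b * a) (hc : α c = c * a ^ (k + 1)) (hd : α d = d * c) :
    abelianizationMatrix α = phiMatrix (k + 1) 1 := by
  ext i j
  fin_cases j
  · change (exponentSum (α a)).toAdd i = _
    rw [ha]; fin_cases i <;> simp [a, phiMatrix]
  · change (exponentSum (α b)).toAdd i = _
    rw [hb]; fin_cases i <;> simp [a, b, phiMatrix]
  · change (exponentSum (α c)).toAdd i = _
    rw [hc]; fin_cases i <;> simp [a, c, phiMatrix]
  · change (exponentSum (α d)).toAdd i = _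
    rw [hd]; fin_cases i <;> simp [c, d, phiMatrix]

lemma isUnit_apply_self_of_row_eq_zero {n R : Type*} [Fintype n] [DecidableEq n]
    [CommSemiring R] (U : (Matrix n n R)ˣ) (i : n)
    (hrow : ∀ j ≠ i, (U : Matrix n n R) i j = 0) : IsUnit ((U : Matrix n n R) i i) := by
  refine IsUnit.of_mul_eq_one (((U⁻¹ : (Matrix n n R)ˣ) : Matrix n n R) i i) ?_
  have h := congrFun (congrFun U.mul_inv i) i
  rwa [Matrix.mul_apply, Finset.sum_eq_single i (fun j _ hj => by rw [hrow j hj, zero_mul])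
    (by simp), Matrix.one_apply_eq] at h

lemma entries_of_mul_phiMatrix_eq {K K' n n' : ℕ} (hK : K ≠ 0) (hn : n ≠ 0) (hn' : n' ≠ 0)
    {U : Matrix (Fin 4) (Fin 4) ℤ} (h : U * phiMatrix K n = phiMatrix K' n' * U) :
    (∀ j ≠ 3, U 3 j = 0) ∧ n * U 2 2 = n' * U 3 3 ∧ n * K * U 0 0 = n' * K' * U 2 2 := by
  have e : ∀ i j, (U * phiMatrix K n) i j = (phiMatrix K' n' * U) i j := fun i j => by rw [h]
  have e11 := e 1 1; have e13 := e 1 3; have e20 := e 2 0; have e21 := e 2 1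
  have e22 := e 2 2; have e23 := e 2 3; have e33 := e 3 3; have e02 := e 0 2
  simp [Matrix.mul_apply, Fin.sum_univ_four, phiMatrix, hn, hn'] at e11 e13 e20 e21 e22 e23 e33 e02
  have u12 : U 1 2 = 0 := by simpa [e11, hn] using e13
  have u32 : U 3 2 = 0 := by simpa [e20, hn] using e33
  have u20 : U 2 0 = 0 := by simpa [u32, hn, hK] using e22
  have u31 : U 3 1 = 0 := by simpa [u20, hn'] using e21.symm
  refine ⟨fun j hj => ?_, by linear_combination e23 - (n.choose 2 * K : ℤ) * u20,
    by linear_combination e02 + (n' : ℤ) * u12 + (n'.choose 2 * K' : ℤ) * u32⟩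
  fin_cases j <;> simp_all

lemma dvd_of_isConj_phiMatrix {K K' n n' : ℕ} (hK : K ≠ 0) (hn : n ≠ 0) (hn' : n' ≠ 0)
    (h : IsConj (phiMatrix K n) (phiMatrix K' n')) : n ∣ n' ∧ n ^ 2 * K ∣ n' ^ 2 * K' := by
  obtain ⟨U, hU⟩ := h
  obtain ⟨hrow, h22, h00⟩ := entries_of_mul_phiMatrix_eq hK hn hn' hU.eq
  have hunit : IsUnit (U 3 3 : ℤ) := isUnit_apply_self_of_row_eq_zero U 3 hrow
  have hsq : (n' ^ 2 * K' : ℤ) * U 3 3 = n ^ 2 * K * U 0 0 := by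
    linear_combination (-(n' * K' : ℤ)) * h22 - (n : ℤ) * h00
  have hn_dvd : (n : ℤ) ∣ n' := hunit.dvd_mul_right.mp ⟨U 2 2, h22.symm⟩
  have hK_dvd : (n ^ 2 * K : ℤ) ∣ n' ^ 2 * K' :=
    hunit.dvd_mul_right.mp ⟨U 0 0, by rw [hsq, mul_assoc]⟩
  exact ⟨by exact_mod_cast hn_dvd, by exact_mod_cast hK_dvd⟩

/-- Let φₖ (resp. φₖ') be the automorphism of F₄ with a↦a, b↦ba, c↦ca^{k+1}, d↦dc.
    If φₖ^p is conjugate in Aut(F₄) to φₖ'^{p'} (p, p' ≥ 1), then k = k' and p = p'. -/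
theorem stmt_10 (k k' p p' : ℕ) (hp : 1 ≤ p) (hp' : 1 ≤ p')
    (α β : MulAut F4)
    (hαa : α a = a) (hαb : α b = b * a) (hαc : α c = c * a ^ (k + 1)) (hαd : α d = d * c)
    (hβa : β a = a) (hβb : β b = b * a) (hβc : β c = c * a ^ (k' + 1)) (hβd : β d = d * c)
    (h : IsConj (α ^ p) (β ^ p')) :
    k = k' ∧ p = p' := by
  have hconj : IsConj (phiMatrix (k + 1) p) (phiMatrix (k' + 1) p') := by
    simpa [abelianizationMatrix_eq_phiMatrix hαa hαb hαc hαd,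
      abelianizationMatrix_eq_phiMatrix hβa hβb hβc hβd, phiMatrix_pow]
      using abelianizationMatrix.map_isConj h
  obtain ⟨hpp', hkk'⟩ := dvd_of_isConj_phiMatrix k.succ_ne_zero (by omega) (by omega) hconj
  obtain ⟨hp'p, hk'k⟩ :=
    dvd_of_isConj_phiMatrix k'.succ_ne_zero (by omega) (by omega) hconj.symm
  obtain rfl : p = p' := Nat.dvd_antisymm hpp' hp'p
  have hk : p ^ 2 * (k + 1) = p ^ 2 * (k' + 1) := Nat.dvd_antisymm hkk' hk'k
  exact ⟨by simpa using Nat.eq_of_mul_eq_mul_left (by positivity) hk, rfl⟩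

end Stmt10
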